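/- arXiv:1710.09494 — 3 statements merged into one kernel-verified Lean document; each statement's English description precedes it below -/
import Mathlib

section
/- Suppose the CSL-style operators Pdiam, Pdur, Pblock, PW on an abstract state type S satisfy laws (L1)–(L8) and the eleven parameter constraints. Let Hpres, Hdet, Alarm be predicates on S and let u, v, wa, wh, g be the timing parameters. Assume the subgoal specifications hold: (i) Pblock 1 (Hpres → Pdiam (1−β) wh Hdet) q0; (ii) Pblock 1 ((¬Hpres) → Pdiam (1−β) wh (PW (1−α) (¬Hdet) Hpres)) q0; (iii) Pdur (1−ε) u (¬Alarm) q0; (iv) Pblock 1 (Hdet → Pdiam (1−ε1') (g−wh) (Pdur (1−ε2') u (¬Alarm))) q0; (v) Pblock 1 ((¬Hdet) → Pdiam (1−δ1') (v−wa−wh) (Alarm ∨ Hdet)) q0. Then the parent goal holds at q0: Pdur (1−ε) u (¬Alarm) q0, and Pblock 1 (Hpres → Pdiam (1−ε1) g (Pdur (1−ε2) u (¬Alarm))) q0, and Pblock 1 ((¬Hpres) → Pdiam (1−δ1) (v−wa) (Alarm ∨ Hpres)) q0. (Theorem 3.1 of the paper: the two children of the goal 'Alarm iff no Heartbeat provided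 within t time' imply their parent.) -/
/-- Theorem 3.1 of the paper: the two children of the goal
`Alarm iff no Heartbeat provided within t time` imply their parent,
assuming the CSL laws (L1)–(L8) and the eleven parameter constraints. -/
theorem mwt_theorem_3_1 {S : Type*} (q0 : S)
    (Pdiam : ℝ → ℝ → (S → Prop) → S → Prop)
    (Pdur : ℝ → ℝ → (S → Prop) → S → Prop)
    (Pblock : ℝ → (S → Prop) → S → Prop)
    (PW : ℝ → (S → Prop) → (S → Prop) → S → Prop)
    (Hpres Hdet Alarm : S → Prop)
    (α β ε ε1 ε1' ε2 ε2' δ1 δ1' δ2 γ1 γ2 η1 η2 η3 η4 lam1 lam2 lam3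
      wh g won woff wth u v wa : ℝ)
    -- laws (L1)–(L8)
    (L1 : ∀ φ : S → Prop, Pblock 1 φ q0 ↔ ∀ q, φ q)
    (L2 : ∀ (a b s t : ℝ) (φ ψ : S → Prop) (q : S),
      Pdiam a s (fun x => φ x ∨ Pdiam b t ψ x) q →
        Pdiam (a * b) (s + t) (fun x => φ x ∨ ψ x) q)
    (L3 : ∀ (a b s : ℝ) (φ ψ θ : S → Prop) (q : S),
      PW a (fun x => φ x ∧ Pdiam b s (fun y => ¬ φ y ∨ θ y) x) ψ q →
        Pdiam (a * b) s (fun x => ψ x ∨ θ x) q)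
    (L4 : ∀ (a b t : ℝ) (φ θ : S → Prop) (q : S),
      Pdur a t θ q → PW b φ (fun x => ¬ θ x) q → Pdur (a + b - 1) t φ q)
    (L5 : ∀ (a t : ℝ) (φ : S → Prop) (q : S), a > 0 → Pdur a t φ q → φ q)
    (L6 : ∀ (a t : ℝ) (φ ψ : S → Prop) (q : S),
      Pdiam a t φ q → (∀ q', φ q' → ψ q') → Pdiam a t ψ q)
    (L7 : ∀ (a b s t : ℝ) (φ : S → Prop) (q : S),
      a ≥ b → s ≤ t → Pdiam a s φ q → Pdiam b t φ q)
    (L8 : ∀ (a b s t : ℝ) (φ : S → Prop) (q : S),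
      a ≥ b → s ≥ t → Pdur a s φ q → Pdur b t φ q)
    -- the eleven parameter constraints
    (c1 : 1 - ε1 ≤ (1 - β) * (1 - ε1'))
    (c2 : 1 - ε2 ≤ 1 - ε2')
    (c3 : wh ≤ g)
    (c4 : 1 - δ1 ≤ (1 - α) * (1 - β) * (1 - δ1'))
    (c5 : 1 - ε ≤ 1 - γ1 - γ2)
    (c6 : (1 - ε1') * (1 - ε2') ≤ (1 - lam1) * (1 - lam2) * (1 - lam3) * (1 - γ1))
    (c7 : g - wh ≥ won + woff)
    (c8 : 1 - γ1 > 0)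
    (c9 : 1 - ε1' ≤ (1 - lam1) * (1 - lam2))
    (c10 : 1 - ε2' ≤ 1 - lam3)
    (c11 : 1 - δ1' ≤ (1 - η1) * (1 - η2) * (1 - η3) * (1 - η4))
    -- subgoal specifications
    (h1 : Pblock 1 (fun x => Hpres x → Pdiam (1 - β) wh Hdet x) q0)
    (h2 : Pblock 1 (fun x => ¬ Hpres x →
            Pdiam (1 - β) wh (PW (1 - α) (fun y => ¬ Hdet y) Hpres) x) q0)
    (h3 : Pdur (1 - ε) u (fun x => ¬ Alarm x) q0)
    (h4 : Pblock 1 (fun x => Hdet x →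
            Pdiam (1 - ε1') (g - wh) (Pdur (1 - ε2') u (fun y => ¬ Alarm y)) x) q0)
    (h5 : Pblock 1 (fun x => ¬ Hdet x →
            Pdiam (1 - δ1') (v - wa - wh) (fun y => Alarm y ∨ Hdet y) x) q0) :
    Pdur (1 - ε) u (fun x => ¬ Alarm x) q0 ∧
    Pblock 1 (fun x => Hpres x →
        Pdiam (1 - ε1) g (Pdur (1 - ε2) u (fun y => ¬ Alarm y)) x) q0 ∧
    Pblock 1 (fun x => ¬ Hpres x →
        Pdiam (1 - δ1) (v - wa) (fun y => Alarm y ∨ Hpres y) x) q0 := by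
  refine ⟨h3, ?_, ?_⟩
  · rw [L1]
    intro q hq
    have hd := (L1 _).1 h1 q hq
    have h4' := (L1 _).1 h4
    have step1 : Pdiam (1 - β) wh (fun x => False ∨
        Pdiam (1 - ε1') (g - wh) (Pdur (1 - ε2') u (fun y => ¬ Alarm y)) x) q :=
      L6 _ _ _ _ _ hd (fun q' h => Or.inr (h4' q' h))
    have step2 := L2 _ _ _ _ _ _ _ step1
    have step3 : Pdiam ((1 - β) * (1 - ε1')) (wh + (g - wh))
        (Pdur (1 - ε2) u (fun y => ¬ Alarm y)) q := by
      refine L6 _ _ _ _ _ step2 ?_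
      rintro q' (h | h)
      · exact h.elim
      · exact L8 _ _ _ _ _ _ (by linarith) le_rfl h
    have := L7 _ (1 - ε1) _ g _ _ c1 (by linarith) step3
    exact this
  · rw [L1]
    intro q hq
    have hw := (L1 _).1 h2 q hq
    have h5' := (L1 _).1 h5
    have hPeq : (fun x => ¬ Hdet x ∧
        Pdiam (1 - δ1') (v - wa - wh) (fun y => ¬ ¬ Hdet y ∨ Alarm y) x)
        = (fun x => ¬ Hdet x) := by
      funext x
      apply propext
      constructor
      · exact And.left
      · intro h
        exact ⟨h, L6 _ _ _ _ _ (h5' x h)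
          (fun q' h' => h'.elim Or.inr (fun hh => Or.inl (fun c => c hh)))⟩
    have step0 : Pdiam (1 - β) wh (fun x => False ∨
        Pdiam ((1 - α) * (1 - δ1')) (v - wa - wh)
          (fun y => Hpres y ∨ Alarm y) x) q := by
      refine L6 _ _ _ _ _ hw ?_
      intro q' hpw
      right
      apply L3 (1 - α) (1 - δ1') (v - wa - wh) (fun y => ¬ Hdet y) Hpres Alarm
      rw [hPeq]
      exact hpw
    have step1 := L2 _ _ _ _ _ _ _ step0
    have step2 : Pdiam ((1 - β) * ((1 - α) * (1 - δ1'))) (wh + (v - wa - wh))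
        (fun y => Alarm y ∨ Hpres y) q := by
      refine L6 _ _ _ _ _ step1 ?_
      rintro q' (h | h)
      · exact h.elim
      · exact h.symm
    have := L7 _ (1 - δ1) _ (v - wa) _ _ (by nlinarith [c4]) (by linarith) step2
    exact this
end

section
/- Suppose the CSL-style operators Pdiam, Pdur, Pblock, PW on an abstract state type S satisfy laws (L1)–(L8) and the eleven parameter constraints. Let Hdet, Alarm, Reset, ThL, ThH be predicates on S and let u, v, wa, wh, g, won, woff, wth be the timing parameters. Assume the subgoal specifications hold: (i) Reset q0; (ii) Pblock 1 (Hdet → Pdiam (1−λ1) won Reset) q0; (iii) Pblock 1 (Reset → Pdur (1−γ1) u ThL) q0; (iv) Pblock 1 ((¬Hdet) → Pdiam (1−η1) (v−wa−2·wh−wth) (PW (1−η2) ThH (Pdiam (1−η3) wh Hdet))) q0; (v) Pblock 1 (ThL → Pdiam (1−λ2) woff (Pdur (1−λ3) u (¬Alarm))) q0; (vi) Pblock 1 (ThH → Pdiam (1−η4) wth (Alarm ∨ ¬ThH)) q0; (vii) PW (1−γ2) (¬Alarm) (¬ThL) q0. Then the parent goal holds at q0: Pdur (1−ε) u (¬Alarm)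 q0, and Pblock 1 (Hdet → Pdiam (1−ε1') (g−wh) (Pdur (1−ε2') u (¬Alarm))) q0, and Pblock 1 ((¬Hdet) → Pdiam (1−δ1') (v−wa−wh) (Alarm ∨ Hdet)) q0. (Theorem 3.3 of the paper: the three children of the goal 'Alarm iff no Heartbeat detected' imply their parent.) -/
/-- Theorem 3.3 of the paper: the three children of the goal
`Alarm iff no Heartbeat detected` imply their parent,
assuming the CSL laws (L1)–(L8) and the eleven parameter constraints. -/
theorem mwt_theorem_3_3 {S : Type*} (q0 : S)
    (Pdiam : ℝ → ℝ → (S → Prop) → S → Prop)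
    (Pdur : ℝ → ℝ → (S → Prop) → S → Prop)
    (Pblock : ℝ → (S → Prop) → S → Prop)
    (PW : ℝ → (S → Prop) → (S → Prop) → S → Prop)
    (Hdet Alarm Reset ThL ThH : S → Prop)
    (α β ε ε1 ε1' ε2 ε2' δ1 δ1' δ2 γ1 γ2 η1 η2 η3 η4 lam1 lam2 lam3
      wh g won woff wth u v wa : ℝ)
    -- laws (L1)–(L8)
    (L1 : ∀ φ : S → Prop, Pblock 1 φ q0 ↔ ∀ q, φ q)
    (L2 : ∀ (a b s t : ℝ) (φ ψ : S → Prop) (q : S),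
      Pdiam a s (fun x => φ x ∨ Pdiam b t ψ x) q →
        Pdiam (a * b) (s + t) (fun x => φ x ∨ ψ x) q)
    (L3 : ∀ (a b s : ℝ) (φ ψ θ : S → Prop) (q : S),
      PW a (fun x => φ x ∧ Pdiam b s (fun y => ¬ φ y ∨ θ y) x) ψ q →
        Pdiam (a * b) s (fun x => ψ x ∨ θ x) q)
    (L4 : ∀ (a b t : ℝ) (φ θ : S → Prop) (q : S),
      Pdur a t θ q → PW b φ (fun x => ¬ θ x) q → Pdur (a + b - 1) t φ q)
    (L5 : ∀ (a t : ℝ) (φ : S → Prop) (q : S), a > 0 → Pdur a t φ q → φ q)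
    (L6 : ∀ (a t : ℝ) (φ ψ : S → Prop) (q : S),
      Pdiam a t φ q → (∀ q', φ q' → ψ q') → Pdiam a t ψ q)
    (L7 : ∀ (a b s t : ℝ) (φ : S → Prop) (q : S),
      a ≥ b → s ≤ t → Pdiam a s φ q → Pdiam b t φ q)
    (L8 : ∀ (a b s t : ℝ) (φ : S → Prop) (q : S),
      a ≥ b → s ≥ t → Pdur a s φ q → Pdur b t φ q)
    -- the eleven parameter constraints
    (c1 : 1 - ε1 ≤ (1 - β) * (1 - ε1'))
    (c2 : 1 - ε2 ≤ 1 - ε2')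
    (c3 : wh ≤ g)
    (c4 : 1 - δ1 ≤ (1 - α) * (1 - β) * (1 - δ1'))
    (c5 : 1 - ε ≤ 1 - γ1 - γ2)
    (c6 : (1 - ε1') * (1 - ε2') ≤ (1 - lam1) * (1 - lam2) * (1 - lam3) * (1 - γ1))
    (c7 : g - wh ≥ won + woff)
    (c8 : 1 - γ1 > 0)
    (c9 : 1 - ε1' ≤ (1 - lam1) * (1 - lam2))
    (c10 : 1 - ε2' ≤ 1 - lam3)
    (c11 : 1 - δ1' ≤ (1 - η1) * (1 - η2) * (1 - η3) * (1 - η4))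
    -- subgoal specifications
    (h1 : Reset q0)
    (h2 : Pblock 1 (fun x => Hdet x → Pdiam (1 - lam1) won Reset x) q0)
    (h3 : Pblock 1 (fun x => Reset x → Pdur (1 - γ1) u ThL x) q0)
    (h4 : Pblock 1 (fun x => ¬ Hdet x →
            Pdiam (1 - η1) (v - wa - 2 * wh - wth)
              (PW (1 - η2) ThH (Pdiam (1 - η3) wh Hdet)) x) q0)
    (h5 : Pblock 1 (fun x => ThL x →
            Pdiam (1 - lam2) woff (Pdur (1 - lam3) u (fun y => ¬ Alarm y)) x) q0)
    (h6 : Pblock 1 (fun x => ThH x →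
            Pdiam (1 - η4) wth (fun y => Alarm y ∨ ¬ ThH y) x) q0)
    (h7 : PW (1 - γ2) (fun x => ¬ Alarm x) (fun x => ¬ ThL x) q0) :
    Pdur (1 - ε) u (fun x => ¬ Alarm x) q0 ∧
    Pblock 1 (fun x => Hdet x →
        Pdiam (1 - ε1') (g - wh) (Pdur (1 - ε2') u (fun y => ¬ Alarm y)) x) q0 ∧
    Pblock 1 (fun x => ¬ Hdet x →
        Pdiam (1 - δ1') (v - wa - wh) (fun y => Alarm y ∨ Hdet y) x) q0 := by

  -- pointwise forms of the block assumptions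
  have h2' := (L1 _).mp h2
  have h3' := (L1 _).mp h3
  have h4' := (L1 _).mp h4
  have h5' := (L1 _).mp h5
  have h6' := (L1 _).mp h6
  refine ⟨?_, ?_, ?_⟩
  · -- Conjunct 1
    have hd : Pdur (1 - γ1) u ThL q0 := h3' q0 h1
    have hd2 : Pdur ((1 - γ1) + (1 - γ2) - 1) u (fun x => ¬ Alarm x) q0 :=
      L4 _ _ _ _ _ _ hd h7
    exact L8 _ _ _ _ _ _ (by linarith) le_rfl hd2
  · -- Conjunct 2
    rw [L1]
    intro q hq
    have d1 : Pdiam (1 - lam1) won Reset q := h2' q hq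
    have d2 : Pdiam (1 - lam1) won
        (fun x => False ∨ Pdiam (1 - lam2) woff
          (Pdur (1 - lam3) u (fun y => ¬ Alarm y)) x) q := by
      refine L6 _ _ _ _ _ d1 ?_
      intro q' hr
      exact Or.inr (h5' q' (L5 _ _ _ _ c8 (h3' q' hr)))
    have d3 := L2 _ _ _ _ _ _ _ d2
    have d4 : Pdiam ((1 - lam1) * (1 - lam2)) (won + woff)
        (Pdur (1 - ε2') u (fun y => ¬ Alarm y)) q := by
      refine L6 _ _ _ _ _ d3 ?_
      rintro q' (h | h)
      · exact h.elim
      · exact L8 _ _ _ _ _ _ (by linarith) le_rfl h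
    exact L7 _ _ _ _ _ _ c9 (by linarith) d4
  · -- Conjunct 3
    rw [L1]
    intro q hq
    have d1 := h4' q hq
    have key : ThH = (fun y => ThH y ∧ Pdiam (1 - η4) wth
        (fun z => ¬ ThH z ∨ Alarm z) y) := by
      funext y
      exact propext ⟨fun h => ⟨h, L6 _ _ _ _ _ (h6' y h)
        (fun q' h' => h'.symm)⟩, And.left⟩
    have d2 : Pdiam (1 - η1) (v - wa - 2 * wh - wth)
        (fun x => False ∨ Pdiam ((1 - η2) * (1 - η4)) wth
          (fun y => Pdiam (1 - η3) wh Hdet y ∨ Alarm y) x) q := by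
      refine L6 _ _ _ _ _ d1 ?_
      intro q' hpw
      rw [key] at hpw
      exact Or.inr (L3 _ _ _ _ _ _ _ hpw)
    have d3 := L2 _ _ _ _ _ _ _ d2
    have d4 : Pdiam ((1 - η1) * ((1 - η2) * (1 - η4))) (v - wa - 2 * wh - wth + wth)
        (fun x => Alarm x ∨ Pdiam (1 - η3) wh Hdet x) q := by
      refine L6 _ _ _ _ _ d3 ?_
      rintro q' (h | h)
      · exact h.elim
      · exact h.symm
    have d5 := L2 _ _ _ _ _ _ _ d4
    exact L7 _ _ _ _ _ _ (by nlinarith [c11]) (by linarith) d5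
end

section
/- Let S be a type, x : ℝ → S a trajectory, φ, ψ, θ predicates on S, and s ≥ 0 a real number. Assume that for every s' ≥ 0, if ψ fails at x r for every r ∈ [0, s'], then φ holds at x s' and there exists t' ∈ [0, s] such that (¬φ) or θ holds at x (s' + t'). Then there exists r ∈ [0, s] such that ψ or θ holds at x r. (This is the pathwise content of Lemma 3.7 of the paper: if, until ψ holds, the trajectory satisfies φ together with 'within time s either ¬φ or θ occurs', then ψ ∨ θ occurs within time s.) -/
/-- Pathwise content of Lemma 3.7 of the paper: if, until `ψ` holds, the
trajectory satisfies `φ` together with "within time `s` either `¬φ` or `θ`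
occurs", then `ψ ∨ θ` occurs within time `s`. -/
theorem pathwise_lemma_3_7 {S : Type*} (x : ℝ → S) (φ ψ θ : S → Prop)
    (s : ℝ) (hs : 0 ≤ s)
    (h : ∀ s', 0 ≤ s' → (∀ r, 0 ≤ r → r ≤ s' → ¬ ψ (x r)) →
      φ (x s') ∧ ∃ t', 0 ≤ t' ∧ t' ≤ s ∧ (¬ φ (x (s' + t')) ∨ θ (x (s' + t')))) :
    ∃ r, 0 ≤ r ∧ r ≤ s ∧ (ψ (x r) ∨ θ (x r)) := by
  by_contra hc
  push_neg at hc
  have hnψ : ∀ r, 0 ≤ r → r ≤ s → ¬ ψ (x r) := fun r h0 h1 => (hc r h0 h1).1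
  have hnθ : ∀ r, 0 ≤ r → r ≤ s → ¬ θ (x r) := fun r h0 h1 => (hc r h0 h1).2
  obtain ⟨-, t', ht0, hts, ht⟩ := h 0 le_rfl (fun r h0 h1 => by
    have : r = 0 := le_antisymm h1 h0
    exact hnψ r h0 (h1.trans hs))
  rw [zero_add] at ht
  rcases ht with hφ | hθ
  · exact hφ (h t' ht0 (fun r h0 h1 => hnψ r h0 (h1.trans hts))).1
  · exact hnθ t' ht0 hts hθ
end
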